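/- For any reduced word u and any word v, the reduct of u·v is ⪰-larger than u; in particular every element of Γ is ⪰ the identity times it from the left. -/

import Mathlib

structure Letter (N : ℕ) where
  lo : ℕ
  hi : ℕ
  lo_le_hi : lo ≤ hi
  hi_le : hi ≤ N

namespace PS

/-- `t` is a (non-strict) subletter of `s`. -/
def Sub {N : ℕ} (t s : Letter N) : Prop := s.lo ≤ t.lo ∧ t.hi ≤ s.hi

/-- `t` is a proper subletter of `s`. -/
def PSub {N : ℕ} (t s : Letter N) : Prop := Sub t s ∧ t ≠ s

/-- Two letters commute iff they have distance at least 2. -/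
def Comm {N : ℕ} (s t : Letter N) : Prop := s.hi + 2 ≤ t.lo ∨ t.hi + 2 ≤ s.lo

abbrev Word (N : ℕ) := List (Letter N)

/-- Commutation step: swap two adjacent commuting letters. -/
def SwapStep {N : ℕ} (u v : Word N) : Prop :=
  ∃ (x y : Word N) (s t : Letter N),
    Comm s t ∧ u = x ++ s :: t :: y ∧ v = x ++ t :: s :: y

/-- Cancellation step: replace an occurrence `s·t` or `t·s` by `s`, when `t ⊆ s`. -/
def CancelStep {N : ℕ} (u v : Word N) : Prop :=
  ∃ (x y : Word N) (s t : Letter N),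
    Sub t s ∧ (u = x ++ s :: t :: y ∨ u = x ++ t :: s :: y) ∧ v = x ++ s :: y

/-- Splitting step: replace an occurrence `s·s` by a (possibly empty) product of
proper subletters of `s`. -/
def SplitStep {N : ℕ} (u v : Word N) : Prop :=
  ∃ (x y : Word N) (s : Letter N) (l : Word N),
    (∀ t ∈ l, PSub t s) ∧ u = x ++ s :: s :: y ∧ v = x ++ l ++ y

/-- Commutation-equivalence of words. -/
def WEquiv {N : ℕ} : Word N → Word N → Prop := Relation.ReflTransGen SwapStep

/-- Reduction: finitely many commutation and cancellation steps. -/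
def Red {N : ℕ} : Word N → Word N → Prop :=
  Relation.ReflTransGen (fun u v => SwapStep u v ∨ CancelStep u v)

/-- Strong reduction: also allowing splitting steps. -/
def SRed {N : ℕ} : Word N → Word N → Prop :=
  Relation.ReflTransGen (fun u v => SwapStep u v ∨ CancelStep u v ∨ SplitStep u v)

/-- The congruence defining the monoid Γ. -/
def GammaRel {N : ℕ} : Word N → Word N → Prop :=
  Relation.EqvGen (fun u v => SwapStep u v ∨ CancelStep u v)

/-- A word is reduced if there is no pair of occurrences `i ≠ j` with `sᵢ ⊆ sⱼ`
such that `sᵢ` commutes with every letter strictly between them. -/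
def Reduced {N : ℕ} (w : Word N) : Prop :=
  ¬ ∃ (x y z : Word N) (a b : Letter N),
      w = x ++ a :: (y ++ b :: z) ∧
      ((Sub a b ∧ ∀ r ∈ y, Comm a r) ∨ (Sub b a ∧ ∀ r ∈ y, Comm b r))

/-- The letter `s` is left-absorbed by the word `v`. -/
def LAbsLetter {N : ℕ} (s : Letter N) (v : Word N) : Prop :=
  ∃ (x : Word N) (t : Letter N) (y : Word N),
    v = x ++ t :: y ∧ Sub s t ∧ ∀ r ∈ x, Comm s r

/-- The letter `s` is properly left-absorbed by the word `v`. -/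
def PLAbsLetter {N : ℕ} (s : Letter N) (v : Word N) : Prop :=
  ∃ (x : Word N) (t : Letter N) (y : Word N),
    v = x ++ t :: y ∧ PSub s t ∧ ∀ r ∈ x, Comm s r

/-- The letter `s` is right-absorbed by the word `w`. -/
def RAbsLetter {N : ℕ} (s : Letter N) (w : Word N) : Prop :=
  ∃ (x : Word N) (t : Letter N) (y : Word N),
    w = x ++ t :: y ∧ Sub s t ∧ ∀ r ∈ y, Comm s r

/-- The letter `s` is properly right-absorbed by the word `w`. -/
def PRAbsLetter {N : ℕ} (s : Letter N) (w : Word N) : Prop :=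
  ∃ (x : Word N) (t : Letter N) (y : Word N),
    w = x ++ t :: y ∧ PSub s t ∧ ∀ r ∈ y, Comm s r

/-- The word `u` is left-absorbed by `v`. -/
def LAbsWord {N : ℕ} (u v : Word N) : Prop := ∀ s ∈ u, LAbsLetter s v

/-- `v` bites `u` from the right: `v` left-absorbs some letter of the final segment of `u`. -/
def BitesRight {N : ℕ} (v u : Word N) : Prop :=
  ∃ (x : Word N) (s : Letter N) (y : Word N),
    u = x ++ s :: y ∧ (∀ r ∈ y, Comm s r) ∧ LAbsLetter s v

end PS

namespace PS

/-- `Repl v u b`: `u` is obtained from `v` by keeping some letters and replacing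
others by (possibly empty) products of proper subletters; `b = true` iff at least
one replacement occurred. -/
inductive Repl {N : ℕ} : Word N → Word N → Bool → Prop
  | nil : Repl [] [] false
  | keep {v u : Word N} {b : Bool} (s : Letter N) :
      Repl v u b → Repl (s :: v) (s :: u) b
  | split {v u : Word N} {b : Bool} (s : Letter N) (l : Word N)
      (hl : ∀ t ∈ l, PSub t s) :
      Repl v u b → Repl (s :: v) (l ++ u) true

/-- `u ≺ v`: some commutation-permutation of `u` is obtained from `v` by replacing
at least one letter of `v` by a product of proper subletters. -/
def Prec {N : ℕ} (u v : Word N) : Prop :=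
  ∃ u' : Word N, WEquiv u u' ∧ Repl v u' true

/-- `u ⪯ v`. -/
def Preceq {N : ℕ} (u v : Word N) : Prop := Prec u v ∨ WEquiv u v

end PS

/-!
Along the reduction `u·v → w`, keep track of a word `u'`, commutation-equivalent to `u`, that is
obtained from the current word by replacing each letter either by itself or by a product of proper
subletters. Initially `u' = u`, every letter of `v` being replaced by the empty product. Under a
commutation step the two corresponding blocks of `u'` commute as well. Under a cancellation step
`s·t → s` or `t·s → s` with `t ⊆ s`, the two blocks merge into one block `P` of subletters of `s`.
Reducedness is invariant under commutation, so `u'` is reduced and no two adjacent letters of `P`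
are comparable; hence `P` is either the single letter `s` or a product of proper subletters of `s`.
At the end, `u'` witnesses `u ⪯ w`.
-/

namespace PS

variable {N : ℕ}

section Letters

variable {a b c s t : Letter N}

lemma Sub.trans (h₁ : Sub a b) (h₂ : Sub b c) : Sub a c :=
  ⟨h₂.1.trans h₁.1, h₁.2.trans h₂.2⟩

lemma Comm.symm (h : Comm s t) : Comm t s := Or.symm h

lemma Comm.of_sub_left (h : Comm s t) (hs : Sub a s) : Comm a t := by
  obtain ⟨hlo, hhi⟩ := hs
  rcases h with h | h
  exacts [Or.inl (by omega), Or.inr (by omega)]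

lemma Comm.not_sub (h : Comm s t) : ¬Sub s t := by
  rintro ⟨hlo, hhi⟩
  have := s.lo_le_hi
  have := t.lo_le_hi
  rcases h with h | h <;> omega

end Letters

section Commutation

lemma SwapStep.append_left {u v : Word N} (p : Word N) (h : SwapStep u v) :
    SwapStep (p ++ u) (p ++ v) := by
  obtain ⟨x, y, s, t, hst, rfl, rfl⟩ := h
  exact ⟨p ++ x, y, s, t, hst, by simp, by simp⟩

lemma WEquiv.append_left {u v : Word N} (p : Word N) (h : WEquiv u v) :
    WEquiv (p ++ u) (p ++ v) :=
  Relation.ReflTransGen.lift (p ++ ·) (fun _ _ => SwapStep.append_left p) _ _ h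

lemma wequiv_cons_append_of_forall_comm {a : Letter N} {l : Word N} (q : Word N)
    (hc : ∀ b ∈ l, Comm a b) : WEquiv (a :: (l ++ q)) (l ++ a :: q) := by
  induction l with
  | nil => exact Relation.ReflTransGen.refl
  | cons c l ih =>
    have hswap : SwapStep (a :: c :: (l ++ q)) (c :: a :: (l ++ q)) :=
      ⟨[], l ++ q, a, c, hc c List.mem_cons_self, rfl, rfl⟩
    exact .head hswap (WEquiv.append_left [c] (ih fun b hb => hc b (List.mem_cons_of_mem c hb)))

lemma wequiv_append_append_of_forall_comm {l₁ l₂ : Word N} (q : Word N)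
    (hc : ∀ a ∈ l₁, ∀ b ∈ l₂, Comm a b) : WEquiv (l₁ ++ (l₂ ++ q)) (l₂ ++ (l₁ ++ q)) := by
  induction l₁ with
  | nil => exact Relation.ReflTransGen.refl
  | cons a l₁ ih =>
    have hl₁ := WEquiv.append_left [a] (ih fun x hx => hc x (List.mem_cons_of_mem a hx))
    have ha := wequiv_cons_append_of_forall_comm (l₁ ++ q) (hc a List.mem_cons_self)
    simp only [List.cons_append]
    exact hl₁.trans ha

end Commutation

section Reduced

/-- `c` left-absorbs a letter of `w` that can be commuted to the front of `w`. -/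
def BitesLeft (c : Letter N) (w : Word N) : Prop :=
  ∃ (y : Word N) (b : Letter N) (z : Word N),
    w = y ++ b :: z ∧ Sub b c ∧ ∀ r ∈ y, Comm b r

lemma reduced_cons_iff {c : Letter N} {w : Word N} :
    Reduced (c :: w) ↔ ¬LAbsLetter c w ∧ ¬BitesLeft c w ∧ Reduced w := by
  simp only [Reduced, ← not_or, not_iff_not]
  constructor
  · rintro ⟨_ | ⟨c', x⟩, y, z, a, b, hw, hv⟩
    · obtain ⟨rfl, rfl⟩ := List.cons.inj hw
      rcases hv with hv | hv
      exacts [Or.inl ⟨y, b, z, rfl, hv⟩, Or.inr (Or.inl ⟨y, b, z, rfl, hv⟩)]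
    · obtain ⟨rfl, rfl⟩ := List.cons.inj hw
      exact Or.inr (Or.inr ⟨x, y, z, a, b, rfl, hv⟩)
  · rintro (⟨y, b, z, rfl, hv⟩ | ⟨y, b, z, rfl, hv⟩ | ⟨x, y, z, a, b, rfl, hv⟩)
    · exact ⟨[], y, z, c, b, rfl, Or.inl hv⟩
    · exact ⟨[], y, z, c, b, rfl, Or.inr hv⟩
    · exact ⟨c :: x, y, z, a, b, rfl, hv⟩

lemma lAbsLetter_cons_of_comm {s t : Letter N} {w : Word N} (hst : Comm s t) :
    LAbsLetter s (t :: w) ↔ LAbsLetter s w := by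
  constructor
  · rintro ⟨_ | ⟨c, y⟩, b, z, hw, hsub, hc⟩
    · obtain ⟨rfl, -⟩ := List.cons.inj hw
      exact absurd hsub hst.not_sub
    · obtain ⟨rfl, rfl⟩ := List.cons.inj hw
      exact ⟨y, b, z, rfl, hsub, fun r hr => hc r (List.mem_cons_of_mem _ hr)⟩
  · rintro ⟨y, b, z, rfl, hsub, hc⟩
    exact ⟨t :: y, b, z, rfl, hsub, List.forall_mem_cons.2 ⟨hst, hc⟩⟩

lemma bitesLeft_cons_of_comm {s t : Letter N} {w : Word N} (hst : Comm s t) :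
    BitesLeft s (t :: w) ↔ BitesLeft s w := by
  constructor
  · rintro ⟨_ | ⟨c, y⟩, b, z, hw, hsub, hc⟩
    · obtain ⟨rfl, -⟩ := List.cons.inj hw
      exact absurd hsub hst.symm.not_sub
    · obtain ⟨rfl, rfl⟩ := List.cons.inj hw
      exact ⟨y, b, z, rfl, hsub, fun r hr => hc r (List.mem_cons_of_mem _ hr)⟩
  · rintro ⟨y, b, z, rfl, hsub, hc⟩
    exact ⟨t :: y, b, z, rfl, hsub, List.forall_mem_cons.2 ⟨hst.of_sub_left hsub, hc⟩⟩

lemma SwapStep.exists_occurrence {b : Letter N} {C : Letter N → Prop}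
    (hC : ∀ r, Comm b r → C r) {w w' : Word N} (h : SwapStep w w')
    (hw : ∃ y z, w = y ++ b :: z ∧ ∀ r ∈ y, C r) :
    ∃ y z, w' = y ++ b :: z ∧ ∀ r ∈ y, C r := by
  obtain ⟨x, y₀, s, t, hst, rfl, rfl⟩ := h
  obtain ⟨y, z, hw, hy⟩ := hw
  induction x generalizing y with
  | nil =>
    rcases y with _ | ⟨c, _ | ⟨c', y⟩⟩ <;> simp only [List.nil_append, List.cons_append,
      List.cons.injEq] at hw
    · obtain ⟨rfl, rfl⟩ := hw
      exact ⟨[t], y₀, rfl, by simpa using hC t hst⟩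
    · obtain ⟨rfl, rfl, rfl⟩ := hw
      exact ⟨[], s :: y₀, rfl, by simp⟩
    · obtain ⟨rfl, rfl, rfl⟩ := hw
      exact ⟨t :: s :: y, z, rfl, fun r hr => hy r (by simp only [List.mem_cons] at hr ⊢; tauto)⟩
  | cons c x ih =>
    rcases y with _ | ⟨c', y⟩ <;> simp only [List.nil_append, List.cons_append,
      List.cons.injEq] at hw
    · obtain ⟨rfl, rfl⟩ := hw
      exact ⟨[], x ++ t :: s :: y₀, rfl, by simp⟩
    · obtain ⟨rfl, hw⟩ := hw
      obtain ⟨y', z', h', hy'⟩ := ih y hw fun r hr => hy r (List.mem_cons_of_mem c hr)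
      exact ⟨c :: y', z', by simp [h'], List.forall_mem_cons.2 ⟨hy c List.mem_cons_self, hy'⟩⟩

lemma LAbsLetter.of_swapStep {a : Letter N} {w w' : Word N} (h : SwapStep w w')
    (ha : LAbsLetter a w) : LAbsLetter a w' := by
  obtain ⟨y, t, z, hw, hsub, hc⟩ := ha
  obtain ⟨y', z', hw', hc'⟩ :=
    h.exists_occurrence (fun r htr => htr.of_sub_left hsub) ⟨y, z, hw, hc⟩
  exact ⟨y', t, z', hw', hsub, hc'⟩

lemma BitesLeft.of_swapStep {c : Letter N} {w w' : Word N} (h : SwapStep w w')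
    (hc : BitesLeft c w) : BitesLeft c w' := by
  obtain ⟨y, b, z, hw, hsub, hb⟩ := hc
  obtain ⟨y', z', hw', hb'⟩ := h.exists_occurrence (fun _ => id) ⟨y, z, hw, hb⟩
  exact ⟨y', b, z', hw', hsub, hb'⟩

lemma Reduced.swap {s t : Letter N} (hst : Comm s t) {x y : Word N}
    (h : Reduced (x ++ s :: t :: y)) : Reduced (x ++ t :: s :: y) := by
  induction x with
  | nil =>
    simp only [List.nil_append, reduced_cons_iff, lAbsLetter_cons_of_comm hst,
      lAbsLetter_cons_of_comm hst.symm, bitesLeft_cons_of_comm hst,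
      bitesLeft_cons_of_comm hst.symm] at h ⊢
    tauto
  | cons c x ih =>
    simp only [List.cons_append, reduced_cons_iff] at h ⊢
    have hback : SwapStep (x ++ t :: s :: y) (x ++ s :: t :: y) := ⟨x, y, t, s, hst.symm, rfl, rfl⟩
    exact ⟨mt (LAbsLetter.of_swapStep hback) h.1, mt (BitesLeft.of_swapStep hback) h.2.1, ih h.2.2⟩

lemma Reduced.of_wequiv {u u' : Word N} (h : WEquiv u u') (hu : Reduced u) : Reduced u' := by
  induction h with
  | refl => exact hu
  | tail _ hstep ih =>
    obtain ⟨x, y, s, t, hst, rfl, rfl⟩ := hstep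
    exact ih.swap hst

lemma Reduced.isChain {w : Word N} (hw : Reduced w) :
    w.IsChain fun a b => ¬Sub a b ∧ ¬Sub b a := by
  refine List.isChain_iff_forall_rel_of_append_cons_cons.2 fun a b x z hxz => ?_
  simp only [← not_or]
  exact fun hv => hw ⟨x, [], z, a, b, hxz, by simpa using hv⟩

end Reduced

section Replacement

lemma Repl.self (w : Word N) : Repl w w false := by
  induction w with
  | nil => exact Repl.nil
  | cons a w ih => exact Repl.keep a ih

lemma Repl.eq_of_false {v u : Word N} {b : Bool} (h : Repl v u b) (hb : b = false) : u = v := by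
  induction h with
  | nil => rfl
  | keep s _ ih => rw [ih hb]
  | split => exact Bool.noConfusion hb

lemma Repl.exists_nil (v : Word N) : ∃ b, Repl v [] b := by
  induction v with
  | nil => exact ⟨false, Repl.nil⟩
  | cons s v ih =>
    obtain ⟨b, h⟩ := ih
    exact ⟨true, Repl.split s [] (by simp) h⟩

lemma Repl.append {x y ux uy : Word N} {bx b : Bool} (hx : Repl x ux bx) (hy : Repl y uy b) :
    Repl (x ++ y) (ux ++ uy) (bx || b) := by
  induction hx with
  | nil => simpa using hy
  | keep s _ ih => exact Repl.keep s ih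
  | split s l hl _ ih => simpa using Repl.split s l hl ih

lemma Repl.exists_of_append {x y u : Word N} {b : Bool} (h : Repl (x ++ y) u b) :
    ∃ ux uy, u = ux ++ uy ∧ (∃ b, Repl x ux b) ∧ ∃ b, Repl y uy b := by
  induction x generalizing u b with
  | nil => exact ⟨[], u, rfl, ⟨false, Repl.nil⟩, b, h⟩
  | cons a x ih =>
    cases h with
    | keep _ h =>
      obtain ⟨ux, uy, rfl, ⟨bx, hx⟩, hy⟩ := ih h
      exact ⟨a :: ux, uy, rfl, ⟨bx, Repl.keep a hx⟩, hy⟩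
    | split _ l hl h =>
      obtain ⟨ux, uy, rfl, ⟨bx, hx⟩, hy⟩ := ih h
      exact ⟨l ++ ux, uy, by simp, ⟨true, Repl.split a l hl hx⟩, hy⟩

lemma Repl.exists_of_append_cons_cons {x y u : Word N} {s t : Letter N} {b : Bool}
    (h : Repl (x ++ s :: t :: y) u b) :
    ∃ ux Ps Pt uy, u = ux ++ (Ps ++ (Pt ++ uy)) ∧ (∃ b, Repl x ux b) ∧ (∃ b, Repl [s] Ps b) ∧
      (∃ b, Repl [t] Pt b) ∧ ∃ b, Repl y uy b := by
  obtain ⟨ux, _, rfl, hx, _, h⟩ := h.exists_of_append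
  obtain ⟨Ps, _, rfl, hs, _, h⟩ := Repl.exists_of_append (x := [s]) h
  obtain ⟨Pt, uy, rfl, ht, hy⟩ := Repl.exists_of_append (x := [t]) h
  exact ⟨ux, Ps, Pt, uy, rfl, hx, hs, ht, hy⟩

lemma Repl.sub_of_singleton {s : Letter N} {P : Word N} {b : Bool} (h : Repl [s] P b) :
    ∀ r ∈ P, Sub r s := by
  cases h with
  | keep _ h =>
    cases h
    simp only [List.mem_singleton, forall_eq]
    exact ⟨le_rfl, le_rfl⟩
  | split _ l hl h =>
    cases h
    simp only [List.append_nil]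
    exact fun r hr => (hl r hr).1

/-- An occurrence of `s` in `P` together with a neighbour would be a comparable adjacent pair;
so either `P = [s]` or all letters of `P` are proper subletters of `s`. -/
lemma Repl.singleton_of_isChain {s : Letter N} {P : Word N} (hsub : ∀ r ∈ P, Sub r s)
    (hP : P.IsChain fun a b => ¬Sub a b ∧ ¬Sub b a) : ∃ b, Repl [s] P b := by
  by_cases hs : s ∈ P
  · obtain ⟨p₁, p₂, rfl⟩ := List.append_of_mem hs
    rcases p₂ with _ | ⟨c, p₂⟩
    · rcases List.eq_nil_or_concat p₁ with rfl | ⟨p₁, c, rfl⟩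
      · exact ⟨false, Repl.keep s Repl.nil⟩
      · have hcs := List.isChain_pair.1 (hP.infix (l₁ := [c, s]) ⟨p₁, [], by simp⟩)
        exact absurd (hsub c (by simp)) hcs.1
    · have hsc := List.isChain_pair.1 (hP.infix (l₁ := [s, c]) ⟨p₁, p₂, by simp⟩)
      exact absurd (hsub c (by simp)) hsc.2
  · have hpsub : ∀ r ∈ P, PSub r s := fun r hr => ⟨hsub r hr, fun hrs => hs (hrs ▸ hr)⟩
    exact ⟨true, by simpa using Repl.split s P hpsub Repl.nil⟩

end Replacement

section Preceq

lemma preceq_iff_exists_repl {u v : Word N} :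
    Preceq u v ↔ ∃ u', WEquiv u u' ∧ ∃ b, Repl v u' b := by
  constructor
  · rintro (⟨u', he, hr⟩ | he)
    exacts [⟨u', he, true, hr⟩, ⟨v, he, false, Repl.self v⟩]
  · rintro ⟨u', he, _ | _, hr⟩
    exacts [Or.inr (Repl.eq_of_false hr rfl ▸ he), Or.inl ⟨u', he, hr⟩]

lemma preceq_append_right (u v : Word N) : Preceq u (u ++ v) := by
  obtain ⟨b, hv⟩ := Repl.exists_nil v
  exact preceq_iff_exists_repl.2 ⟨u, .refl, _, by simpa using (Repl.self u).append hv⟩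

lemma Preceq.of_swapStep {u z z' : Word N} (h : Preceq u z) (hs : SwapStep z z') :
    Preceq u z' := by
  obtain ⟨u', he, b, hr⟩ := preceq_iff_exists_repl.1 h
  obtain ⟨x, y, s, t, hst, rfl, rfl⟩ := hs
  obtain ⟨ux, Ps, Pt, uy, rfl, ⟨_, hx⟩, ⟨_, hs⟩, ⟨_, ht⟩, _, hy⟩ := hr.exists_of_append_cons_cons
  have hcomm : ∀ a ∈ Ps, ∀ b ∈ Pt, Comm a b := fun a ha b hb =>
    ((hst.of_sub_left (hs.sub_of_singleton a ha)).symm.of_sub_left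
      (ht.sub_of_singleton b hb)).symm
  refine preceq_iff_exists_repl.2
    ⟨ux ++ (Pt ++ (Ps ++ uy)), ?_, _, hx.append (ht.append (hs.append hy))⟩
  exact he.trans (WEquiv.append_left ux (wequiv_append_append_of_forall_comm uy hcomm))

lemma preceq_of_merge {u x y ux P₁ P₂ uy : Word N} {s : Letter N} {b₁ b₂ : Bool} (hu : Reduced u)
    (he : WEquiv u (ux ++ (P₁ ++ (P₂ ++ uy)))) (hx : Repl x ux b₁) (hy : Repl y uy b₂)
    (hsub : ∀ r ∈ P₁ ++ P₂, Sub r s) : Preceq u (x ++ s :: y) := by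
  have hchain := (hu.of_wequiv he).isChain.infix (l₁ := P₁ ++ P₂) ⟨ux, uy, by simp⟩
  obtain ⟨_, hP⟩ := Repl.singleton_of_isChain hsub hchain
  exact preceq_iff_exists_repl.2 ⟨_, he, _, by simpa using hx.append (hP.append hy)⟩

lemma Preceq.of_cancelStep {u z z' : Word N} (hu : Reduced u) (h : Preceq u z)
    (hc : CancelStep z z') : Preceq u z' := by
  obtain ⟨u', he, b, hr⟩ := preceq_iff_exists_repl.1 h
  obtain ⟨x, y, s, t, hts, rfl | rfl, rfl⟩ := hc <;>
    obtain ⟨ux, P₁, P₂, uy, rfl, ⟨_, hx⟩, ⟨_, h₁⟩, ⟨_, h₂⟩, _, hy⟩ :=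
      hr.exists_of_append_cons_cons <;>
    refine preceq_of_merge hu he hx hy fun r hr => ?_ <;>
    rcases List.mem_append.1 hr with hr | hr
  · exact h₁.sub_of_singleton r hr
  · exact (h₂.sub_of_singleton r hr).trans hts
  · exact (h₁.sub_of_singleton r hr).trans hts
  · exact h₂.sub_of_singleton r hr

lemma Preceq.of_red {u z z' : Word N} (hu : Reduced u) (h : Preceq u z) (hr : Red z z') :
    Preceq u z' := by
  induction hr with
  | refl => exact h
  | tail _ hstep ih => exact hstep.elim ih.of_swapStep (ih.of_cancelStep hu)

end Preceq

end PS

open PS in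
theorem self_preceq_reduct_of_append_general {N : ℕ} (u v w : Word N)
    (hu : Reduced u) (hred : Red (u ++ v) w) :
    Preceq u w :=
  (preceq_append_right u v).of_red hu hred

open PS in
/-- For reduced `u` and any `v`, the reduct of `u·v` is `⪰`-larger than `u`. -/
theorem self_preceq_reduct_of_append {N : ℕ} (u v w : Word N)
    (hu : Reduced u) (hred : Red (u ++ v) w) (hw : Reduced w) :
    Preceq u w :=
  self_preceq_reduct_of_append_general u v w hu hred
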